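/- arXiv:2202.05540 — 2 statements merged into one kernel-verified Lean document; each statement's English description precedes it below -/
import Mathlib

section
/- Let K ≥ 2, let F ∈ 𝓕_K, and let Q ∈ 𝓠_K^in be such that there exist a row index k₀ and a real number δ with 0 < δ < 1/2 and Q_{k₀ i} ≥ δ for all i ∈ {1,…,N}. Then there exist F² ∈ 𝓕_K with F² ∉ 𝓕_K^an and Q² ∈ 𝓠_K^in such that FQ = F²Q², (F,Q) is not equivalent to (F²,Q²), and moreover the set of indices k such that some row of F² equals δ_k·e_kᵀ for some δ_k > 0 equals the corresponding set of indices for F with k₀ removed. -/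
open Matrix BigOperators

/-- `F ∈ 𝓕_K`: real `M × K` matrix with entries in `[0,1]`. -/
def memF {M K : ℕ} (F : Matrix (Fin M) (Fin K) ℝ) : Prop :=
  ∀ s k, 0 ≤ F s k ∧ F s k ≤ 1

/-- `Q ∈ 𝓠_K`: real `K × N` matrix with nonnegative entries whose columns sum to 1. -/
def memQ {K N : ℕ} (Q : Matrix (Fin K) (Fin N) ℝ) : Prop :=
  (∀ k i, 0 ≤ Q k i) ∧ ∀ i, ∑ k, Q k i = 1

/-- The standard basis vector `e_k` occurs as a column of `Q`. -/
def isColE {K N : ℕ} (Q : Matrix (Fin K) (Fin N) ℝ) (k : Fin K) : Prop :=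
  ∃ i, ∀ l, Q l i = if l = k then (1 : ℝ) else 0

/-- `Q ∈ 𝓠_K^an`: anchor condition on `Q`. -/
def memQan {K N : ℕ} (Q : Matrix (Fin K) (Fin N) ℝ) : Prop :=
  memQ Q ∧ ∀ k, isColE Q k

/-- The `K-1` column differences `F_{⋆1}−F_{⋆K}, …, F_{⋆(K−1)}−F_{⋆K}` are
linearly independent (stated for every proof of `0 < K`). -/
def colDiffIndep {M K : ℕ} (F : Matrix (Fin M) (Fin K) ℝ) : Prop :=
  ∀ hK : 0 < K, LinearIndependent ℝ (fun j : Fin (K - 1) =>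
    (fun s => F s (Fin.castLE (Nat.sub_le K 1) j) - F s ⟨K - 1, Nat.sub_lt hK Nat.one_pos⟩ :
      Fin M → ℝ))

/-- `F ∈ 𝓕_K^in`. -/
def memFin {M K : ℕ} (F : Matrix (Fin M) (Fin K) ℝ) : Prop :=
  memF F ∧ colDiffIndep F

/-- `F ∈ 𝓕_K^an`: anchor condition on `F`. -/
def memFan {M K : ℕ} (F : Matrix (Fin M) (Fin K) ℝ) : Prop :=
  memF F ∧ ∀ k, ∃ s, 0 < F s k ∧ ∀ l, l ≠ k → F s l = 0

/-- `Q ∈ 𝓠_K^in`: the rows of `Q` are linearly independent. -/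
def memQin {K N : ℕ} (Q : Matrix (Fin K) (Fin N) ℝ) : Prop :=
  memQ Q ∧ LinearIndependent ℝ (fun k : Fin K => Q k)

/-- `F ∈ 𝓕_K^d`: the columns of `F` are mutually distinct. -/
def memFd {M K : ℕ} (F : Matrix (Fin M) (Fin K) ℝ) : Prop :=
  memF F ∧ ∀ k l : Fin K, (∀ s, F s k = F s l) → k = l

/-- `Q ∈ 𝓠_K^ua`: every column of `Q` is a standard basis vector, and every
standard basis vector occurs as a column. -/
def memQua {K N : ℕ} (Q : Matrix (Fin K) (Fin N) ℝ) : Prop :=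
  memQ Q ∧ (∀ i, ∃ k, ∀ l, Q l i = if l = k then (1 : ℝ) else 0) ∧ ∀ k, isColE Q k

/-- `(F¹,Q¹) ∼ (F²,Q²)`: there is a bijection (permutation) `π` with
`F²_{⋆k} = F¹_{⋆π(k)}` and `Q²_{k⋆} = Q¹_{π(k)⋆}` for every `k`. -/
def MEquiv {M N K₁ K₂ : ℕ} (F1 : Matrix (Fin M) (Fin K₁) ℝ) (Q1 : Matrix (Fin K₁) (Fin N) ℝ)
    (F2 : Matrix (Fin M) (Fin K₂) ℝ) (Q2 : Matrix (Fin K₂) (Fin N) ℝ) : Prop :=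
  ∃ π : Fin K₂ → Fin K₁, Function.Bijective π ∧
    (∀ k s, F2 s k = F1 s (π k)) ∧ (∀ k i, Q2 k i = Q1 (π k) i)

/-- `co(F)`: convex hull of the columns of `F` in `ℝ^M`. -/
def coCols {M K : ℕ} (F : Matrix (Fin M) (Fin K) ℝ) : Set (Fin M → ℝ) :=
  convexHull ℝ {v | ∃ k, v = fun s => F s k}

/-- `cone(Q)`: all nonnegative linear combinations of the rows of `Q` in `ℝ^N`. -/
def coneRows {K N : ℕ} (Q : Matrix (Fin K) (Fin N) ℝ) : Set (Fin N → ℝ) :=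
  {x | ∃ c : Fin K → ℝ, (∀ k, 0 ≤ c k) ∧ x = ∑ k, c k • Q k}

/-- A model is identifiable if equality of the products implies equivalence. -/
def Identifiable {M N : ℕ}
    (𝓜 : ∀ K : ℕ, Set (Matrix (Fin M) (Fin K) ℝ × Matrix (Fin K) (Fin N) ℝ)) : Prop :=
  ∀ (K₁ K₂ : ℕ) (F1 : Matrix (Fin M) (Fin K₁) ℝ) (Q1 : Matrix (Fin K₁) (Fin N) ℝ)
    (F2 : Matrix (Fin M) (Fin K₂) ℝ) (Q2 : Matrix (Fin K₂) (Fin N) ℝ),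
    (F1, Q1) ∈ 𝓜 K₁ → (F2, Q2) ∈ 𝓜 K₂ → F1 * Q1 = F2 * Q2 → MEquiv F1 Q1 F2 Q2

/-- The set of indices `k` such that some row of `F` equals `δ_k · e_kᵀ` with `δ_k > 0`. -/
def anchorRows {M K : ℕ} (F : Matrix (Fin M) (Fin K) ℝ) : Set (Fin K) :=
  {k | ∃ (s : Fin M) (d : ℝ), 0 < d ∧ ∀ l, F s l = if l = k then d else 0}

/-!
Multiplying `F` on the right by an invertible `A` and `Q` on the left by `A⁻¹` preserves `FQ`.
Take `A⁻¹ = 1 + δ (e_{k₁} - e_{k₀}) e_{k₁}ᵀ`: it moves `δ Q_{k₁⋆}` from row `k₀` of `Q` to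
row `k₁`; row `k₀` stays nonnegative because `Q_{k₀ i} ≥ δ`, and the rows stay independent. Then
column `k₁` of `FA` is `(F_{⋆k₁} + δ F_{⋆k₀}) / (1 + δ)`, which is positive wherever `F_{⋆k₀}` is,
so no row of `FA` is an anchor for `k₀`, while every other anchor row survives up to scaling.
The new row `Q_{k₀⋆} - δ Q_{k₁⋆}` is not a row of `Q` by linear independence, so the two
factorizations are not equivalent.
-/

theorem IsIdempotentElem.one_sub_div_smul_mul_one_add_smul {R A : Type*} [Field R] [Ring A]
    [Algebra R A] {N : A} (hN : IsIdempotentElem N) {t : R} (ht : 1 + t ≠ 0) :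
    (1 - (t / (1 + t)) • N) * (1 + t • N) = 1 := by
  have hcoeff : t - t / (1 + t) - t / (1 + t) * t = 0 := by field_simp; ring
  calc (1 - (t / (1 + t)) • N) * (1 + t • N)
      = 1 + (t - t / (1 + t) - t / (1 + t) * t) • N := by
        rw [sub_mul, one_mul, mul_add, mul_one, smul_mul_smul_comm, hN.eq, sub_smul, sub_smul]
        abel
    _ = 1 := by rw [hcoeff, zero_smul, add_zero]

theorem LinearIndependent.sub_smul_ne {ι R V : Type*} [Field R] [AddCommGroup V] [Module R V]
    {v : ι → V} (hv : LinearIndependent R v) {a b : ι} (hab : a ≠ b) {t : R} (ht : t ≠ 0)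
    (d : ι) : v a - t • v b ≠ v d := by
  intro h
  by_cases hda : d = a
  · subst hda
    have : t • v b = 0 := by simpa using h
    exact hv.ne_zero b ((smul_eq_zero.mp this).resolve_left ht)
  · have hmem : v a ∈ Submodule.span R (v '' {b, d}) := by
      rw [Set.image_pair, Submodule.mem_span_pair]
      exact ⟨t, 1, by rw [one_smul, ← h]; abel⟩
    exact hv.notMem_span_image (by simp [hab, Ne.symm hda]) hmem

namespace Matrix

variable {n m p R : Type*} [Fintype n] [DecidableEq n] [Field R]

def rowTransfer (a b : n) : Matrix n n R := single b b 1 - single a b 1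

theorem isIdempotentElem_rowTransfer {a b : n} (hab : a ≠ b) :
    IsIdempotentElem (rowTransfer a b : Matrix n n R) := by
  simp [IsIdempotentElem, rowTransfer, sub_mul, mul_sub, hab.symm]

theorem mul_one_sub_smul_rowTransfer_apply_of_ne (F : Matrix p n R) (a : n) {b l : n} (c : R)
    (s : p) (hl : l ≠ b) : (F * (1 - c • rowTransfer a b : Matrix n n R)) s l = F s l := by
  simp [rowTransfer, Matrix.mul_sub, Matrix.mul_smul, hl]

theorem mul_one_sub_div_smul_rowTransfer_apply_self (F : Matrix p n R) (a b : n) {t : R}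
    (ht : 1 + t ≠ 0) (s : p) :
    (1 + t) * (F * (1 - (t / (1 + t)) • rowTransfer a b : Matrix n n R)) s b =
      F s b + t * F s a := by
  simp only [rowTransfer, Matrix.mul_sub, Matrix.mul_smul, Matrix.mul_one, sub_apply, smul_apply,
    mul_single_apply_same, mul_one, smul_eq_mul]
  field_simp
  ring

theorem one_add_smul_rowTransfer_mul_apply_left (Q : Matrix n m R) {a b : n} (hab : a ≠ b)
    (t : R) : ((1 + t • rowTransfer a b : Matrix n n R) * Q) a = Q a - t • Q b := by
  ext i
  simp only [rowTransfer, Matrix.add_mul, Matrix.one_mul, smul_mul, Matrix.sub_mul, add_apply,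
    smul_apply, sub_apply, ne_eq, hab, not_false_eq_true, single_mul_apply_of_ne,
    single_mul_apply_same, one_mul, zero_sub, smul_eq_mul, mul_neg, Pi.sub_apply, Pi.smul_apply]
  ring

theorem one_add_smul_rowTransfer_mul_apply_right (Q : Matrix n m R) {a b : n} (hab : a ≠ b)
    (t : R) : ((1 + t • rowTransfer a b : Matrix n n R) * Q) b = (1 + t) • Q b := by
  ext i
  simp only [rowTransfer, Matrix.add_mul, Matrix.one_mul, smul_mul, Matrix.sub_mul, add_apply,
    smul_apply, sub_apply, single_mul_apply_same, one_mul, ne_eq, hab.symm, not_false_eq_true,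
    single_mul_apply_of_ne, sub_zero, smul_eq_mul, Pi.smul_apply]
  ring

theorem one_add_smul_rowTransfer_mul_apply_of_ne (Q : Matrix n m R) {a b k : n} (ha : k ≠ a)
    (hb : k ≠ b) (t : R) : ((1 + t • rowTransfer a b : Matrix n n R) * Q) k = Q k := by
  ext i
  simp [rowTransfer, Matrix.add_mul, Matrix.sub_mul, Matrix.smul_mul, ha, hb]

theorem sum_one_add_smul_rowTransfer_mul_apply (Q : Matrix n m R) (a b : n) (t : R) (i : m) :
    ∑ k, ((1 + t • rowTransfer a b : Matrix n n R) * Q) k i = ∑ k, Q k i := by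
  have hcol (c : n) : ∑ k, (single c b (1 : R) * Q) k i = Q b i := by
    rw [Finset.sum_eq_single c] <;> simp_all
  simp [rowTransfer, Matrix.add_mul, Matrix.smul_mul, Matrix.sub_mul, Finset.sum_add_distrib,
    ← Finset.mul_sum, Finset.sum_sub_distrib, hcol]

theorem linearIndependent_row_mul_of_isUnit {B : Matrix n n R} (hB : IsUnit B)
    {Q : Matrix n m R} (hQ : LinearIndependent R Q.row) : LinearIndependent R (B * Q).row := by
  rw [← vecMul_injective_iff] at hQ ⊢
  intro x y h
  simp only [← vecMul_vecMul] at h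
  exact vecMul_injective_of_isUnit hB (hQ h)

end Matrix

def IsAnchorAt {n : Type*} (r : n → ℝ) (k : n) : Prop :=
  0 < r k ∧ ∀ l ≠ k, r l = 0

theorem isAnchorAt_iff_of_mix {n : Type*} {r r' : n → ℝ} {a b k : n} {t : ℝ}
    (hr : ∀ l, 0 ≤ r l) (ht : 0 < t) (hab : a ≠ b) (hb : (1 + t) * r' b = r b + t * r a)
    (hoff : ∀ l ≠ b, r' l = r l) : IsAnchorAt r' k ↔ IsAnchorAt r k ∧ k ≠ a := by
  have hra := hr a
  have hrb := hr b
  have hb_zero : r' b = 0 ↔ r b = 0 ∧ r a = 0 := by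
    constructor
    · intro h; rw [h, mul_zero] at hb; constructor <;> nlinarith
    · rintro ⟨h1, h2⟩; rw [h1, h2, mul_zero, add_zero] at hb
      exact (mul_eq_zero.mp hb).resolve_left (by linarith)
  constructor
  · rintro ⟨hpos, hzero⟩
    have hka : k ≠ a := by
      rintro rfl
      have hra0 := (hb_zero.mp (hzero b hab.symm)).2
      rw [hoff k hab, hra0] at hpos
      exact hpos.false
    have hra0 : r a = 0 := by rw [← hoff a hab]; exact hzero a hka.symm
    refine ⟨⟨?_, fun l hl => ?_⟩, hka⟩
    · by_cases hkb : k = b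
      · subst hkb
        rw [hra0, mul_zero, add_zero] at hb
        rw [← hb]
        positivity
      · rwa [← hoff k hkb]
    · by_cases hlb : l = b
      · subst hlb
        exact (hb_zero.mp (hzero l hl)).1
      · rw [← hoff l hlb]
        exact hzero l hl
  · rintro ⟨⟨hpos, hzero⟩, hka⟩
    have hra0 : r a = 0 := hzero a hka.symm
    refine ⟨?_, fun l hl => ?_⟩
    · by_cases hkb : k = b
      · subst hkb
        rw [hra0, mul_zero, add_zero] at hb
        rw [← hb] at hpos
        exact pos_of_mul_pos_right hpos (by positivity)
      · rwa [hoff k hkb]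
    · by_cases hlb : l = b
      · subst hlb
        exact hb_zero.mpr ⟨hzero l hl, hra0⟩
      · rw [hoff l hlb]
        exact hzero l hl

section

variable {M N K : ℕ}

theorem mem_anchorRows_iff {F : Matrix (Fin M) (Fin K) ℝ} {k : Fin K} :
    k ∈ anchorRows F ↔ ∃ s, IsAnchorAt (F s) k := by
  constructor
  · rintro ⟨s, d, hd, hs⟩
    refine ⟨s, by simpa [hs k] using hd, fun l hl => by simp [hs l, hl]⟩
  · rintro ⟨s, hpos, hzero⟩
    exact ⟨s, F s k, hpos, fun l => by split_ifs with h <;> simp [h, hzero]⟩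

theorem memQ.le_one {Q : Matrix (Fin K) (Fin N) ℝ} (hQ : memQ Q) (k : Fin K) (i : Fin N) :
    Q k i ≤ 1 :=
  hQ.2 i ▸ Finset.single_le_sum (fun l _ => hQ.1 l i) (Finset.mem_univ k)

theorem memF_mul_one_sub_div_smul_rowTransfer {F : Matrix (Fin M) (Fin K) ℝ} (hF : memF F)
    (a b : Fin K) {t : ℝ} (ht : 0 ≤ t) :
    memF (F * (1 - (t / (1 + t)) • rowTransfer a b : Matrix (Fin K) (Fin K) ℝ)) := by
  intro s l
  by_cases hl : l = b
  · subst hl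
    have hcol := mul_one_sub_div_smul_rowTransfer_apply_self F a l (by positivity) s
    obtain ⟨hFl0, hFl1⟩ := hF s l
    obtain ⟨hFa0, hFa1⟩ := hF s a
    constructor <;> nlinarith
  · rw [mul_one_sub_smul_rowTransfer_apply_of_ne F a _ s hl]
    exact hF s l

theorem anchorRows_mul_one_sub_div_smul_rowTransfer {F : Matrix (Fin M) (Fin K) ℝ}
    (hF : ∀ s l, 0 ≤ F s l) {a b : Fin K} (hab : a ≠ b) {t : ℝ} (ht : 0 < t) :
    anchorRows (F * (1 - (t / (1 + t)) • rowTransfer a b : Matrix (Fin K) (Fin K) ℝ)) =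
      anchorRows F \ {a} := by
  ext k
  simp only [mem_anchorRows_iff, Set.mem_sdiff, Set.mem_singleton_iff, ← exists_and_right]
  exact exists_congr fun s => isAnchorAt_iff_of_mix (hF s) ht hab
    (mul_one_sub_div_smul_rowTransfer_apply_self F a b (by positivity) s)
    (fun l hl => mul_one_sub_smul_rowTransfer_apply_of_ne F a _ s hl)

theorem memQin_one_add_smul_rowTransfer_mul {Q : Matrix (Fin K) (Fin N) ℝ} (hQ : memQin Q)
    {a b : Fin K} (hab : a ≠ b) {t : ℝ} (ht : 0 ≤ t) (hQa : ∀ i, t * Q b i ≤ Q a i) :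
    memQin ((1 + t • rowTransfer a b : Matrix (Fin K) (Fin K) ℝ) * Q) := by
  obtain ⟨⟨hnonneg, hsum⟩, hind⟩ := hQ
  have hinv := (isIdempotentElem_rowTransfer (R := ℝ) hab).one_sub_div_smul_mul_one_add_smul
    (t := t) (by positivity)
  have hunit : IsUnit (1 + t • rowTransfer a b : Matrix (Fin K) (Fin K) ℝ) :=
    ⟨⟨_, _, mul_eq_one_comm.mp hinv, hinv⟩, rfl⟩
  refine ⟨⟨fun k i => ?_, fun i => by rw [sum_one_add_smul_rowTransfer_mul_apply, hsum]⟩,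
    linearIndependent_row_mul_of_isUnit hunit hind⟩
  rcases eq_or_ne k a with rfl | hka
  · rw [one_add_smul_rowTransfer_mul_apply_left Q hab]
    simpa using hQa i
  rcases eq_or_ne k b with rfl | hkb
  · rw [one_add_smul_rowTransfer_mul_apply_right Q hab]
    exact mul_nonneg (by positivity) (hnonneg k i)
  · rw [one_add_smul_rowTransfer_mul_apply_of_ne Q hka hkb]
    exact hnonneg k i

end

theorem stmt5_general {M N K : ℕ} (hK : 2 ≤ K)
    (F : Matrix (Fin M) (Fin K) ℝ) (hF : memF F)
    (Q : Matrix (Fin K) (Fin N) ℝ) (hQ : memQin Q)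
    (k₀ : Fin K) (δ : ℝ) (hδ0 : 0 < δ)
    (hQk₀ : ∀ i, δ ≤ Q k₀ i) :
    ∃ (F2 : Matrix (Fin M) (Fin K) ℝ) (Q2 : Matrix (Fin K) (Fin N) ℝ),
      memF F2 ∧ ¬ memFan F2 ∧ memQin Q2 ∧ F * Q = F2 * Q2 ∧
      ¬ MEquiv F Q F2 Q2 ∧ anchorRows F2 = anchorRows F \ {k₀} := by
  have : Nontrivial (Fin K) := Fin.nontrivial_iff_two_le.mpr hK
  obtain ⟨k₁, hk₁⟩ := exists_ne k₀
  have hne : k₀ ≠ k₁ := hk₁.symm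
  set A : Matrix (Fin K) (Fin K) ℝ := 1 - (δ / (1 + δ)) • rowTransfer k₀ k₁
  set B : Matrix (Fin K) (Fin K) ℝ := 1 + δ • rowTransfer k₀ k₁
  have hAB : A * B = 1 :=
    (isIdempotentElem_rowTransfer hne).one_sub_div_smul_mul_one_add_smul (by positivity)
  have hanchor : anchorRows (F * A) = anchorRows F \ {k₀} :=
    anchorRows_mul_one_sub_div_smul_rowTransfer (fun s l => (hF s l).1) hne hδ0
  refine ⟨F * A, B * Q, memF_mul_one_sub_div_smul_rowTransfer hF _ _ hδ0.le, fun hFan => ?_,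
    memQin_one_add_smul_rowTransfer_mul hQ hne hδ0.le fun i => ?_,
    by rw [Matrix.mul_assoc, ← Matrix.mul_assoc A, hAB, Matrix.one_mul], fun hequiv => ?_, hanchor⟩
  · have hk₀ : k₀ ∈ anchorRows (F * A) := mem_anchorRows_iff.mpr (hFan.2 k₀)
    exact (hanchor ▸ hk₀).2 rfl
  · nlinarith [hQ.1.le_one k₁ i, hQk₀ i]
  · obtain ⟨π, -, -, hQπ⟩ := hequiv
    apply hQ.2.sub_smul_ne hne hδ0.ne' (π k₀)
    rw [← one_add_smul_rowTransfer_mul_apply_left Q hne]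
    exact funext (hQπ k₀)

/-- if `F ∈ 𝓕_K` and `Q ∈ 𝓠_K^in` has a row `k₀` with `Q_{k₀ i} ≥ δ` for all
`i` (`0 < δ < 1/2`), there are `F² ∈ 𝓕_K ∖ 𝓕_K^an` and `Q² ∈ 𝓠_K^in` with `FQ = F²Q²`,
`(F,Q) ≁ (F²,Q²)`, and the anchor rows of `F²` are those of `F` minus `k₀`. -/
theorem stmt5 {M N K : ℕ} (hM : 1 ≤ M) (hN : 1 ≤ N) (hK : 2 ≤ K)
    (F : Matrix (Fin M) (Fin K) ℝ) (hF : memF F)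
    (Q : Matrix (Fin K) (Fin N) ℝ) (hQ : memQin Q)
    (k₀ : Fin K) (δ : ℝ) (hδ0 : 0 < δ) (hδh : δ < 1 / 2)
    (hQk₀ : ∀ i, δ ≤ Q k₀ i) :
    ∃ (F2 : Matrix (Fin M) (Fin K) ℝ) (Q2 : Matrix (Fin K) (Fin N) ℝ),
      memF F2 ∧ ¬ memFan F2 ∧ memQin Q2 ∧ F * Q = F2 * Q2 ∧
      ¬ MEquiv F Q F2 Q2 ∧ anchorRows F2 = anchorRows F \ {k₀} :=
  stmt5_general hK F hF Q hQ k₀ δ hδ0 hQk₀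
end

section
/- Let 𝓜 be a model such that (1) for every (F,Q) ∈ 𝓜 the number of columns K(F) of F satisfies K(F) < N, and (2) for every (F,Q) ∈ 𝓜 and every Q' ∈ 𝓠_{K(F)}^an, the pair (F,Q') belongs to 𝓜. Then 𝓜 is identifiable if and only if both of the following hold: (a) for all (F¹,Q¹),(F²,Q²) ∈ 𝓜 with F¹Q¹ = F²Q², co(F¹) = co(F²); and (b) for every (F,Q) ∈ 𝓜 with K = K(F), the vectors F_{⋆1}−F_{⋆K}, …, F_{⋆(K−1)}−F_{⋆K} are linearly independent. -/
open Matrix BigOperators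

/-!
Condition (b) says that the columns of `F` are affinely independent. Affinely independent points
are extreme points of their convex hull, so two such families with the same convex hull agree up
to a permutation, and uniqueness of barycentric coordinates then recovers `Q` from `F * Q`.
Conversely, an affine dependence among the columns of `F` splits into two distinct probability
vectors `v ≠ v'` with `F v = F v'`. Since `K < N`, putting `v` resp. `v'` into the columns of an
anchored `Q` beyond the `K` anchors gives equal products, while the anchors force every
equivalence between the two pairs to use the identity permutation.
-/

open Set

theorem ConvexIndependent.mem_extremePoints_convexHull {ι E : Type*} [Finite ι]
    [AddCommGroup E] [Module ℝ E] [TopologicalSpace E] [T2Space E] [IsTopologicalAddGroup E]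
    [ContinuousSMul ℝ E] [LocallyConvexSpace ℝ E] {p : ι → E} (hp : ConvexIndependent ℝ p)
    (i : ι) : p i ∈ (convexHull ℝ (range p)).extremePoints ℝ := by
  by_contra hi
  have hext : (convexHull ℝ (range p)).extremePoints ℝ ⊆ p '' {i}ᶜ := by
    intro x hx
    obtain ⟨j, rfl⟩ := extremePoints_convexHull_subset hx
    exact ⟨j, fun hj : j = i => hi (hj ▸ hx), rfl⟩
  have hclosed : IsClosed (convexHull ℝ (p '' {i}ᶜ)) :=
    ((finite_range p).subset (image_subset_range _ _)).isCompact_convexHull ℝ |>.isClosed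
  -- Krein–Milman: the hull is the closed convex hull of its extreme points, none of which is `p i`
  have hhull : convexHull ℝ (range p) ⊆ convexHull ℝ (p '' {i}ᶜ) := by
    rw [← closure_convexHull_extremePoints ((finite_range p).isCompact_convexHull ℝ)
      (convex_convexHull ℝ _)]
    exact closure_minimal (convexHull_mono hext) hclosed
  exact (hp.mem_convexHull_iff _ i).1 (hhull (subset_convexHull ℝ _ (mem_range_self i))) rfl

theorem AffineIndependent.convexIndependent {𝕜 ι E : Type*} [Field 𝕜] [LinearOrder 𝕜]
    [IsStrictOrderedRing 𝕜] [AddCommGroup E] [Module 𝕜 E] {p : ι → E}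
    (hp : AffineIndependent 𝕜 p) : ConvexIndependent 𝕜 p :=
  convexIndependent_iff_notMem_convexHull_sdiff.2 fun i s hi =>
    hp.notMem_affineSpan_sdiff i s (convexHull_subset_affineSpan _ hi)

theorem ConvexIndependent.range_subset_of_convexHull_eq {ι ι' E : Type*} [Finite ι]
    [AddCommGroup E] [Module ℝ E] [TopologicalSpace E] [T2Space E] [IsTopologicalAddGroup E]
    [ContinuousSMul ℝ E] [LocallyConvexSpace ℝ E] {p : ι → E} {q : ι' → E}
    (hp : ConvexIndependent ℝ p) (h : convexHull ℝ (range p) = convexHull ℝ (range q)) :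
    range p ⊆ range q := by
  rintro _ ⟨i, rfl⟩
  exact extremePoints_convexHull_subset (h ▸ hp.mem_extremePoints_convexHull i)

theorem AffineIndependent.exists_equiv_of_convexHull_range_eq {ι ι' E : Type*} [Finite ι]
    [Finite ι'] [AddCommGroup E] [Module ℝ E] [TopologicalSpace E] [T2Space E]
    [IsTopologicalAddGroup E] [ContinuousSMul ℝ E] [LocallyConvexSpace ℝ E]
    {p : ι → E} {q : ι' → E} (hp : AffineIndependent ℝ p) (hq : AffineIndependent ℝ q)
    (h : convexHull ℝ (range p) = convexHull ℝ (range q)) :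
    ∃ e : ι' ≃ ι, ∀ k, q k = p (e k) := by
  have hrange : range q = range p := subset_antisymm
    (hq.convexIndependent.range_subset_of_convexHull_eq h.symm)
    (hp.convexIndependent.range_subset_of_convexHull_eq h)
  exact ⟨(Equiv.ofInjective q hq.injective).trans
    ((Equiv.setCongr hrange).trans (Equiv.ofInjective p hp.injective).symm), fun k =>
    (Equiv.apply_ofInjective_symm hp.injective ⟨q k, hrange ▸ mem_range_self k⟩).symm⟩

theorem Matrix.col_mul_eq_sum_smul {R m n o : Type*} [CommSemiring R] [Fintype n]
    (F : Matrix m n R) (Q : Matrix n o R) (i : o) : (F * Q).col i = ∑ k, Q k i • F.col k := by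
  ext s
  simp [Matrix.mul_apply, mul_comm]

theorem Matrix.eq_of_mul_eq_mul_of_affineIndependent {R m n o : Type*} [CommRing R] [Fintype n]
    {F : Matrix m n R} {Q Q' : Matrix n o R} (hF : AffineIndependent R F.col)
    (hQ : ∀ i, ∑ k, Q k i = 1) (hQ' : ∀ i, ∑ k, Q' k i = 1) (h : F * Q = F * Q') : Q = Q' := by
  rw [affineIndependent_iff_eq_of_fintype_affineCombination_eq] at hF
  ext k i
  have hcol := congr_arg (fun P : Matrix m o R => P.col i) h
  simp only [col_mul_eq_sum_smul] at hcol
  refine congr_fun (hF (fun k => Q k i) (fun k => Q' k i) (hQ i) (hQ' i) ?_) k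
  rwa [Finset.univ.affineCombination_eq_linear_combination _ _ (hQ i),
    Finset.univ.affineCombination_eq_linear_combination _ _ (hQ' i)]

theorem colDiffIndep_iff_affineIndependent {M K : ℕ} (F : Matrix (Fin M) (Fin K) ℝ) :
    colDiffIndep F ↔ AffineIndependent ℝ F.col := by
  rcases Nat.eq_zero_or_pos K with rfl | hK
  · exact iff_of_true (fun h => absurd h (lt_irrefl 0)) (affineIndependent_of_subsingleton ℝ _)
  set last : Fin K := ⟨K - 1, Nat.sub_lt hK Nat.one_pos⟩
  let e : Fin (K - 1) ≃ {k : Fin K // k ≠ last} := Equiv.ofBijective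
    (fun j => ⟨Fin.castLE (Nat.sub_le K 1) j, fun h => by simp [last, Fin.ext_iff] at h; omega⟩)
    ⟨fun i j h => by simpa [Fin.ext_iff] using h, fun k => ⟨⟨k, by
      have := k.2; simp [last, Fin.ext_iff] at this; omega⟩, rfl⟩⟩
  rw [affineIndependent_iff_linearIndependent_vsub ℝ _ last, ← linearIndependent_equiv e]
  exact ⟨fun h => h hK, fun h _ => h⟩

theorem exists_ne_mem_stdSimplex_of_not_affineIndependent {𝕜 ι V : Type*} [Field 𝕜]
    [LinearOrder 𝕜] [IsStrictOrderedRing 𝕜] [Fintype ι] [AddCommGroup V] [Module 𝕜 V]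
    {p : ι → V} (hp : ¬ AffineIndependent 𝕜 p) :
    ∃ v ∈ stdSimplex 𝕜 ι, ∃ v' ∈ stdSimplex 𝕜 ι, v ≠ v' ∧ ∑ i, v i • p i = ∑ i, v' i • p i := by
  simp only [affineIndependent_iff_of_fintype, not_forall] at hp
  obtain ⟨w, hw, hwp, i, hi⟩ := hp
  rw [Finset.univ.weightedVSub_eq_linear_combination hw] at hwp
  set t := ∑ j, (w j)⁺
  have hsum_neg : ∑ j, (w j)⁻ = t := by
    rw [eq_comm, ← sub_eq_zero, ← Finset.sum_sub_distrib]
    simpa only [posPart_sub_negPart] using hw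
  have ht : 0 < t := by
    rcases lt_or_gt_of_ne hi with hneg | hpos
    · rw [← hsum_neg]
      exact (negPart_pos_iff.2 hneg).trans_le
        (Finset.single_le_sum (fun j _ => negPart_nonneg (w j)) (Finset.mem_univ i))
    · exact (posPart_pos_iff.2 hpos).trans_le
        (Finset.single_le_sum (fun j _ => posPart_nonneg (w j)) (Finset.mem_univ i))
  refine ⟨fun j => t⁻¹ * (w j)⁺, ⟨fun j => by positivity, ?_⟩,
    fun j => t⁻¹ * (w j)⁻, ⟨fun j => by positivity, ?_⟩, fun h => hi ?_, ?_⟩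
  · rw [← Finset.mul_sum, inv_mul_cancel₀ ht.ne']
  · rw [← Finset.mul_sum, hsum_neg, inv_mul_cancel₀ ht.ne']
  · have := congr_fun h i
    rw [mul_right_inj' (inv_ne_zero ht.ne')] at this
    rw [← posPart_sub_negPart (w i), this, sub_self]
  · simp only [mul_smul, ← Finset.smul_sum]
    congr 1
    rw [← sub_eq_zero, ← Finset.sum_sub_distrib]
    simpa only [← sub_smul, posPart_sub_negPart] using hwp

def anchorMatrix (N : ℕ) {K : ℕ} (v : Fin K → ℝ) : Matrix (Fin K) (Fin N) ℝ :=
  Matrix.of fun k i => if h : (i : ℕ) < K then (if k = ⟨i, h⟩ then 1 else 0) else v k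

section anchorMatrix

variable {N K : ℕ} {v v' : Fin K → ℝ}

theorem memQan_anchorMatrix (hKN : K ≤ N) (hv : v ∈ stdSimplex ℝ (Fin K)) :
    memQan (anchorMatrix N v) := by
  refine ⟨⟨fun k i => ?_, fun i => ?_⟩, fun k => ⟨⟨k, k.2.trans_le hKN⟩, fun l => ?_⟩⟩
  · simp only [anchorMatrix, of_apply]
    split_ifs <;> simp [hv.1 k]
  · by_cases h : (i : ℕ) < K
    · simp [anchorMatrix, h]
    · simpa [anchorMatrix, h] using hv.2
  · simp [anchorMatrix]

theorem mul_anchorMatrix_eq {M : ℕ} {F : Matrix (Fin M) (Fin K) ℝ}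
    (h : ∑ k, v k • F.col k = ∑ k, v' k • F.col k) :
    F * anchorMatrix N v = F * anchorMatrix N v' := by
  refine ext_col fun i => ?_
  simp only [col_mul_eq_sum_smul]
  by_cases hi : (i : ℕ) < K
  · simp [anchorMatrix, hi]
  · simpa [anchorMatrix, hi] using h

theorem eq_of_mequiv_anchorMatrix {M : ℕ} (hKN : K < N) {F F' : Matrix (Fin M) (Fin K) ℝ}
    (h : MEquiv F (anchorMatrix N v) F' (anchorMatrix N v')) : v = v' := by
  obtain ⟨π, -, -, hQ⟩ := h
  have hπ : ∀ k, π k = k := fun k => by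
    simpa [anchorMatrix, eq_comm] using hQ k ⟨k, k.2.trans hKN⟩
  funext k
  simpa [anchorMatrix, hπ] using (hQ k ⟨K, hKN⟩).symm

theorem affineIndependent_col_of_mequiv_anchorMatrix {M : ℕ} (hKN : K < N)
    {F : Matrix (Fin M) (Fin K) ℝ}
    (h : ∀ v ∈ stdSimplex ℝ (Fin K), ∀ v' ∈ stdSimplex ℝ (Fin K),
      F * anchorMatrix N v = F * anchorMatrix N v' →
        MEquiv F (anchorMatrix N v) F (anchorMatrix N v')) :
    AffineIndependent ℝ F.col := by
  by_contra hF
  obtain ⟨v, hv, v', hv', hne, hsum⟩ := exists_ne_mem_stdSimplex_of_not_affineIndependent hF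
  exact hne (eq_of_mequiv_anchorMatrix hKN (h v hv v' hv' (mul_anchorMatrix_eq hsum)))

end anchorMatrix

theorem coCols_eq_convexHull_range_col {M K : ℕ} (F : Matrix (Fin M) (Fin K) ℝ) :
    coCols F = convexHull ℝ (range F.col) := by
  simp only [coCols, range, eq_comm]
  rfl

theorem MEquiv.coCols_eq {M N K₁ K₂ : ℕ} {F1 : Matrix (Fin M) (Fin K₁) ℝ}
    {Q1 : Matrix (Fin K₁) (Fin N) ℝ} {F2 : Matrix (Fin M) (Fin K₂) ℝ}
    {Q2 : Matrix (Fin K₂) (Fin N) ℝ} (h : MEquiv F1 Q1 F2 Q2) : coCols F1 = coCols F2 := by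
  obtain ⟨π, hπ, hF, -⟩ := h
  have hcol : F2.col = F1.col ∘ π := funext fun k => funext fun s => hF k s
  rw [coCols_eq_convexHull_range_col, coCols_eq_convexHull_range_col, hcol,
    hπ.2.range_comp]

theorem mequiv_of_coCols_eq {M N K₁ K₂ : ℕ} {F1 : Matrix (Fin M) (Fin K₁) ℝ}
    {Q1 : Matrix (Fin K₁) (Fin N) ℝ} {F2 : Matrix (Fin M) (Fin K₂) ℝ}
    {Q2 : Matrix (Fin K₂) (Fin N) ℝ} (hF1 : AffineIndependent ℝ F1.col)
    (hF2 : AffineIndependent ℝ F2.col) (hQ1 : ∀ i, ∑ k, Q1 k i = 1)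
    (hQ2 : ∀ i, ∑ k, Q2 k i = 1) (hco : coCols F1 = coCols F2) (h : F1 * Q1 = F2 * Q2) :
    MEquiv F1 Q1 F2 Q2 := by
  rw [coCols_eq_convexHull_range_col, coCols_eq_convexHull_range_col] at hco
  obtain ⟨e, he⟩ := hF1.exists_equiv_of_convexHull_range_eq hF2 hco
  have hF : ∀ k s, F2 s k = F1 s (e k) := fun k s => congr_fun (he k) s
  have hprod : F2 * Q2 = F1 * Q2.submatrix e.symm id := by
    ext s i
    simp only [mul_apply, submatrix_apply, id]
    rw [← e.sum_comp]
    simp [hF]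
  have hQ : Q1 = Q2.submatrix e.symm id :=
    eq_of_mul_eq_mul_of_affineIndependent hF1 hQ1
      (fun i => by simpa [e.symm.sum_comp (fun k => Q2 k i)] using hQ2 i) (h.trans hprod)
  exact ⟨e, e.bijective, hF, fun k i => by simp [hQ]⟩

theorem stmt7_general {M N : ℕ}
    (𝓜 : ∀ K : ℕ, Set (Matrix (Fin M) (Fin K) ℝ × Matrix (Fin K) (Fin N) ℝ))
    (hmem : ∀ (K : ℕ) (F : Matrix (Fin M) (Fin K) ℝ) (Q : Matrix (Fin K) (Fin N) ℝ),
      (F, Q) ∈ 𝓜 K → 1 ≤ K ∧ memF F ∧ memQ Q)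
    (h1 : ∀ (K : ℕ) (F : Matrix (Fin M) (Fin K) ℝ) (Q : Matrix (Fin K) (Fin N) ℝ),
      (F, Q) ∈ 𝓜 K → K < N)
    (h2 : ∀ (K : ℕ) (F : Matrix (Fin M) (Fin K) ℝ) (Q : Matrix (Fin K) (Fin N) ℝ),
      (F, Q) ∈ 𝓜 K → ∀ Q' : Matrix (Fin K) (Fin N) ℝ, memQan Q' → (F, Q') ∈ 𝓜 K) :
    Identifiable 𝓜 ↔
      ((∀ (K₁ K₂ : ℕ) (F1 : Matrix (Fin M) (Fin K₁) ℝ) (Q1 : Matrix (Fin K₁) (Fin N) ℝ)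
          (F2 : Matrix (Fin M) (Fin K₂) ℝ) (Q2 : Matrix (Fin K₂) (Fin N) ℝ),
          (F1, Q1) ∈ 𝓜 K₁ → (F2, Q2) ∈ 𝓜 K₂ → F1 * Q1 = F2 * Q2 →
          coCols F1 = coCols F2) ∧
        (∀ (K : ℕ) (F : Matrix (Fin M) (Fin K) ℝ) (Q : Matrix (Fin K) (Fin N) ℝ),
          (F, Q) ∈ 𝓜 K → colDiffIndep F)) := by
  simp only [colDiffIndep_iff_affineIndependent]
  constructor
  · intro hid
    refine ⟨fun K₁ K₂ F1 Q1 F2 Q2 h₁ h₂ hprod => (hid K₁ K₂ F1 Q1 F2 Q2 h₁ h₂ hprod).coCols_eq,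
      fun K F Q hFQ => affineIndependent_col_of_mequiv_anchorMatrix (h1 K F Q hFQ) ?_⟩
    have hanchor : ∀ v ∈ stdSimplex ℝ (Fin K), (F, anchorMatrix N v) ∈ 𝓜 K := fun v hv =>
      h2 K F Q hFQ _ (memQan_anchorMatrix (h1 K F Q hFQ).le hv)
    exact fun v hv v' hv' => hid K K _ _ _ _ (hanchor v hv) (hanchor v' hv')
  · rintro ⟨hco, hindep⟩ K₁ K₂ F1 Q1 F2 Q2 h₁ h₂ hprod
    exact mequiv_of_coCols_eq (hindep K₁ F1 Q1 h₁) (hindep K₂ F2 Q2 h₂) (hmem K₁ F1 Q1 h₁).2.2.2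
      (hmem K₂ F2 Q2 h₂).2.2.2 (hco K₁ K₂ F1 Q1 F2 Q2 h₁ h₂ hprod) hprod

/-- characterisation of identifiability for models closed under
replacing `Q` by any element of `𝓠_{K(F)}^an`, with `K(F) < N`. -/
theorem stmt7 {M N : ℕ} (hM : 1 ≤ M) (hN : 1 ≤ N)
    (𝓜 : ∀ K : ℕ, Set (Matrix (Fin M) (Fin K) ℝ × Matrix (Fin K) (Fin N) ℝ))
    (hmem : ∀ (K : ℕ) (F : Matrix (Fin M) (Fin K) ℝ) (Q : Matrix (Fin K) (Fin N) ℝ),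
      (F, Q) ∈ 𝓜 K → 1 ≤ K ∧ memF F ∧ memQ Q)
    (h1 : ∀ (K : ℕ) (F : Matrix (Fin M) (Fin K) ℝ) (Q : Matrix (Fin K) (Fin N) ℝ),
      (F, Q) ∈ 𝓜 K → K < N)
    (h2 : ∀ (K : ℕ) (F : Matrix (Fin M) (Fin K) ℝ) (Q : Matrix (Fin K) (Fin N) ℝ),
      (F, Q) ∈ 𝓜 K → ∀ Q' : Matrix (Fin K) (Fin N) ℝ, memQan Q' → (F, Q') ∈ 𝓜 K) :
    Identifiable 𝓜 ↔
      ((∀ (K₁ K₂ : ℕ) (F1 : Matrix (Fin M) (Fin K₁) ℝ) (Q1 : Matrix (Fin K₁) (Fin N) ℝ)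
          (F2 : Matrix (Fin M) (Fin K₂) ℝ) (Q2 : Matrix (Fin K₂) (Fin N) ℝ),
          (F1, Q1) ∈ 𝓜 K₁ → (F2, Q2) ∈ 𝓜 K₂ → F1 * Q1 = F2 * Q2 →
          coCols F1 = coCols F2) ∧
        (∀ (K : ℕ) (F : Matrix (Fin M) (Fin K) ℝ) (Q : Matrix (Fin K) (Fin N) ℝ),
          (F, Q) ∈ 𝓜 K → colDiffIndep F)) :=
  stmt7_general 𝓜 hmem h1 h2
end
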